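/- Uniform estimate on 1 − g_α: the quantity K = 2π · sup_{0<ρ<1} ρ B₁(ρ) is finite, and there exists a universal constant 𝒞 > 0 (one may take 𝒞 = max{K,1}) such that for every α > 0 and every z ∈ ℝ², one has 0 ≤ 1 − g_α(z) ≤ 𝒞 √α |z|; in particular 0 < g_α(z) ≤ 1 for all z. -/

import Mathlib

open MeasureTheory Real

/-- The radial Bessel kernel with parameter `1`. -/
noncomputable def besselRadialOne (ρ : ℝ) : ℝ :=
  (1 / (4 * π)) * ∫ t in Set.Ioi (0 : ℝ), t⁻¹ * Real.exp (-ρ ^ 2 / (4 * t) - t)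

/-- `g_α(z) = ∫₀^∞ exp(−s − α|z|²/(4s)) ds`. -/
noncomputable def gAlpha (α : ℝ) (z : EuclideanSpace ℝ (Fin 2)) : ℝ :=
  ∫ s in Set.Ioi (0 : ℝ), Real.exp (-s - α * ‖z‖ ^ 2 / (4 * s))

/-!
The two elementary inequalities `exp (-x) ≤ 1 / √x` and `1 - exp (-x) ≤ √x` (for `x ≥ 0`) dominate
the integrands of `B₁` and of `1 - g_α` by multiples of `exp (-t) / √t`, whose integral is
`Γ(1/2) = √π`. This gives `ρ B₁(ρ) ≤ √π / (2π)` and `1 - g_α(z) ≤ (√π / 2) √α |z| ≤ √α |z|`, while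
`0 < g_α(z) ≤ 1` because the integrand of `g_α` is positive and at most `exp (-s)`.
-/

open Set

lemma one_sub_exp_neg_le_sqrt {x : ℝ} (hx : 0 ≤ x) : 1 - exp (-x) ≤ √x := by
  rcases le_or_gt 1 x with h | h
  · linarith [one_le_sqrt.2 h, exp_nonneg (-x)]
  · nlinarith [sq_sqrt hx, sqrt_nonneg x, add_one_le_exp (-x)]

lemma exp_neg_le_inv_sqrt {x : ℝ} (hx : 0 < x) : exp (-x) ≤ (√x)⁻¹ := by
  have : √x ≤ exp x := by
    nlinarith [sq_sqrt hx.le, sqrt_nonneg x, add_one_le_exp x, sq_nonneg (√x - 1)]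
  rw [exp_neg]
  exact inv_anti₀ (sqrt_pos.2 hx) this

lemma sqrt_div_four_mul {a t : ℝ} (ha : 0 ≤ a) : √(a / (4 * t)) = √a / (2 * √t) := by
  rw [sqrt_div ha, sqrt_mul (by norm_num), show (4 : ℝ) = 2 ^ 2 by norm_num,
    sqrt_sq (by norm_num)]

lemma exp_neg_div_sqrt_eq_rpow {t : ℝ} (ht : 0 < t) :
    exp (-t) / √t = exp (-t) * t ^ ((1 / 2 : ℝ) - 1) := by
  rw [show (1 / 2 : ℝ) - 1 = -(1 / 2) by norm_num, rpow_neg ht.le, ← sqrt_eq_rpow, div_eq_mul_inv]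

lemma integrableOn_exp_neg_div_sqrt : IntegrableOn (fun t => exp (-t) / √t) (Ioi 0) :=
  (GammaIntegral_convergent (by norm_num : (0 : ℝ) < 1 / 2)).congr_fun
    (fun _ ht => (exp_neg_div_sqrt_eq_rpow ht).symm) measurableSet_Ioi

lemma integral_exp_neg_div_sqrt : ∫ t in Ioi 0, exp (-t) / √t = √π := by
  rw [setIntegral_congr_fun measurableSet_Ioi fun _ ht => exp_neg_div_sqrt_eq_rpow ht,
    ← Gamma_eq_integral (by norm_num), Gamma_one_half_eq]

lemma setIntegral_le_mul_sqrt_pi {f : ℝ → ℝ} {c : ℝ} (hf₀ : ∀ t ∈ Ioi (0 : ℝ), 0 ≤ f t)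
    (hf : ∀ t ∈ Ioi (0 : ℝ), f t ≤ c * (exp (-t) / √t)) : ∫ t in Ioi 0, f t ≤ c * √π := by
  rw [← integral_exp_neg_div_sqrt, ← integral_const_mul]
  exact integral_mono_of_nonneg ((ae_restrict_iff' measurableSet_Ioi).2 (.of_forall hf₀))
    (integrableOn_exp_neg_div_sqrt.const_mul c)
    ((ae_restrict_iff' measurableSet_Ioi).2 (.of_forall hf))

lemma mul_besselRadialOne_le {ρ : ℝ} (hρ : 0 < ρ) : ρ * besselRadialOne ρ ≤ √π / (2 * π) := by
  have hI : ∫ t in Ioi 0, t⁻¹ * exp (-ρ ^ 2 / (4 * t) - t) ≤ 2 / ρ * √π := by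
    refine setIntegral_le_mul_sqrt_pi (fun t (ht : 0 < t) => by positivity) fun t (ht : 0 < t) => ?_
    have hexp : exp (-(ρ ^ 2 / (4 * t))) ≤ 2 * √t / ρ := by
      simpa [sqrt_div_four_mul (sq_nonneg ρ), sqrt_sq hρ.le] using
        exp_neg_le_inv_sqrt (show 0 < ρ ^ 2 / (4 * t) by positivity)
    calc t⁻¹ * exp (-ρ ^ 2 / (4 * t) - t) = t⁻¹ * exp (-(ρ ^ 2 / (4 * t))) * exp (-t) := by
          rw [mul_assoc, ← exp_add]; ring_nf
      _ ≤ t⁻¹ * (2 * √t / ρ) * exp (-t) := by gcongr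
      _ = 2 / ρ * (exp (-t) / √t) := by
          field_simp; rw [sq_sqrt ht.le]
  calc ρ * besselRadialOne ρ ≤ ρ * (1 / (4 * π) * (2 / ρ * √π)) := by
        unfold besselRadialOne; gcongr
    _ = √π / (2 * π) := by field_simp; ring

lemma bddAbove_mul_besselRadialOne :
    BddAbove ((fun ρ => ρ * besselRadialOne ρ) '' Ioo (0 : ℝ) 1) :=
  ⟨√π / (2 * π), by rintro _ ⟨ρ, hρ, rfl⟩; exact mul_besselRadialOne_le hρ.1⟩

section

variable {β : ℝ}

lemma exp_neg_sub_div_le_exp_neg (hβ : 0 ≤ β) {s : ℝ} (hs : 0 < s) :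
    exp (-s - β / (4 * s)) ≤ exp (-s) :=
  exp_le_exp.2 (by have : 0 ≤ β / (4 * s) := (by positivity); linarith)

lemma integrableOn_exp_neg_sub_div (hβ : 0 ≤ β) :
    IntegrableOn (fun s => exp (-s - β / (4 * s))) (Ioi 0) := by
  refine (integrableOn_exp_neg_Ioi 0).mono' (by fun_prop) ?_
  refine (ae_restrict_iff' measurableSet_Ioi).2 (.of_forall fun s (hs : 0 < s) => ?_)
  rw [norm_of_nonneg (exp_pos _).le]
  exact exp_neg_sub_div_le_exp_neg hβ hs

lemma one_sub_integral_exp_neg_sub_div_eq (hβ : 0 ≤ β) :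
    1 - ∫ s in Ioi 0, exp (-s - β / (4 * s)) =
      ∫ s in Ioi 0, (exp (-s) - exp (-s - β / (4 * s))) := by
  rw [integral_sub (integrableOn_exp_neg_Ioi 0) (integrableOn_exp_neg_sub_div hβ),
    integral_exp_neg_Ioi_zero]

lemma integral_exp_neg_sub_div_le_one (hβ : 0 ≤ β) :
    ∫ s in Ioi 0, exp (-s - β / (4 * s)) ≤ 1 := by
  rw [← sub_nonneg, one_sub_integral_exp_neg_sub_div_eq hβ]
  exact setIntegral_nonneg measurableSet_Ioi fun s hs =>
    sub_nonneg.2 (exp_neg_sub_div_le_exp_neg hβ hs)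

lemma one_sub_integral_exp_neg_sub_div_le (hβ : 0 ≤ β) :
    1 - ∫ s in Ioi 0, exp (-s - β / (4 * s)) ≤ √β / 2 * √π := by
  rw [one_sub_integral_exp_neg_sub_div_eq hβ]
  refine setIntegral_le_mul_sqrt_pi (fun s hs => sub_nonneg.2 (exp_neg_sub_div_le_exp_neg hβ hs))
    fun s (hs : 0 < s) => ?_
  calc exp (-s) - exp (-s - β / (4 * s)) = exp (-s) * (1 - exp (-(β / (4 * s)))) := by
        rw [mul_sub, mul_one, ← exp_add]; ring_nf
    _ ≤ exp (-s) * √(β / (4 * s)) := by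
        gcongr; exact one_sub_exp_neg_le_sqrt (by positivity)
    _ = √β / 2 * (exp (-s) / √s) := by
        rw [sqrt_div_four_mul hβ]; field_simp

lemma integral_exp_neg_sub_div_pos (hβ : 0 ≤ β) : 0 < ∫ s in Ioi 0, exp (-s - β / (4 * s)) := by
  have : NeZero (volume.restrict (Ioi (0 : ℝ))) := ⟨by simp⟩
  exact integral_exp_pos (integrableOn_exp_neg_sub_div hβ)

end

lemma one_sub_gAlpha_le {α : ℝ} (hα : 0 ≤ α) (z : EuclideanSpace ℝ (Fin 2)) :
    1 - gAlpha α z ≤ √α * ‖z‖ := by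
  have hπ : √π ≤ 2 := by
    rw [sqrt_le_left (by norm_num)]; linarith [pi_le_four]
  calc 1 - gAlpha α z ≤ √(α * ‖z‖ ^ 2) / 2 * √π :=
        one_sub_integral_exp_neg_sub_div_le (by positivity)
    _ ≤ √(α * ‖z‖ ^ 2) := by nlinarith [sqrt_nonneg (α * ‖z‖ ^ 2)]
    _ = √α * ‖z‖ := by rw [sqrt_mul hα, sqrt_sq (norm_nonneg z)]

/-- Uniform estimate on `1 − g_α`: the quantity `K = 2π sup_{0<ρ<1} ρ B₁(ρ)` is
finite, and with `𝒞 = max (K, 1) > 0` one has `0 ≤ 1 − g_α(z) ≤ 𝒞 √α |z|`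
for every `α > 0` and `z ∈ ℝ²`; in particular `0 < g_α(z) ≤ 1`. -/
theorem uniform_estimate_one_sub_g :
    BddAbove ((fun ρ => ρ * besselRadialOne ρ) '' Set.Ioo (0 : ℝ) 1) ∧
    ∃ C : ℝ, 0 < C ∧
      C = max (2 * π * sSup ((fun ρ => ρ * besselRadialOne ρ) '' Set.Ioo (0 : ℝ) 1)) 1 ∧
      ∀ α : ℝ, 0 < α → ∀ z : EuclideanSpace ℝ (Fin 2),
        (0 ≤ 1 - gAlpha α z ∧ 1 - gAlpha α z ≤ C * Real.sqrt α * ‖z‖) ∧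
        (0 < gAlpha α z ∧ gAlpha α z ≤ 1) := by
  refine ⟨bddAbove_mul_besselRadialOne, _, one_pos.trans_le (le_max_right _ _), rfl,
    fun α hα z => ?_⟩
  have hβ : 0 ≤ α * ‖z‖ ^ 2 := by positivity
  have hg_le : gAlpha α z ≤ 1 := integral_exp_neg_sub_div_le_one hβ
  refine ⟨⟨sub_nonneg.2 hg_le, (one_sub_gAlpha_le hα.le z).trans ?_⟩,
    integral_exp_neg_sub_div_pos hβ, hg_le⟩
  rw [mul_assoc]
  exact le_mul_of_one_le_left (by positivity) (le_max_right _ _)
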